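/- arXiv:2603.20189 — 2 statements merged into one kernel-verified Lean document; each statement's English description precedes it below -/
import Mathlib

section
/- Suppose a differentiable trajectory z satisfies ż(τ) = A z(τ) + B v(τ) on [t,r]. Define c(t) by W(t,r) c(t) = ∫_t^r Φ(r,τ) B v(τ) dτ, with W(t,r) invertible for all t < r. Then c satisfies the differential identity W(t,r) (d/dt)c(t) − Φ(r,t) B Bᵀ Φ(r,t)ᵀ c(t) = −Φ(r,t) B v(t). -/
open Matrix MeasureTheory intervalIntegral

section LinftyAux
attribute [local instance] Matrix.linftyOpNormedAddCommGroup Matrix.linftyOpNormedSpace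
  Matrix.linftyOpNormedRing Matrix.linftyOpNormedAlgebra

lemma exp_entry_hasDerivAt {d : ℕ} (A : Matrix (Fin d) (Fin d) ℝ) (r t : ℝ) (i j : Fin d) :
    HasDerivAt (fun τ : ℝ => NormedSpace.exp ((r - τ) • A) i j)
      (-((A * NormedSpace.exp ((r - t) • A)) i j)) t := by
  have h1 : HasDerivAt (fun u : ℝ => NormedSpace.exp (u • A))
      (A * NormedSpace.exp ((r - t) • A)) (r - t) := hasDerivAt_exp_smul_const' A (r - t)
  have h2 : HasDerivAt (fun τ : ℝ => r - τ) (-1) t := (hasDerivAt_id t).const_sub r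
  have h3 := h1.scomp t h2
  let e0 : Matrix (Fin d) (Fin d) ℝ →ₗ[ℝ] ℝ :=
    (LinearMap.proj (R := ℝ) (φ := fun _ : Fin d => ℝ) j).comp
      (LinearMap.proj (R := ℝ) (φ := fun _ : Fin d => Fin d → ℝ) i)
  let e : Matrix (Fin d) (Fin d) ℝ →L[ℝ] ℝ := LinearMap.toContinuousLinearMap e0
  have h4 := e.hasFDerivAt.comp_hasDerivAt t h3
  simp only [neg_smul, one_smul, map_neg] at h4
  exact h4

end LinftyAux

/-- Entrywise differentiability of the determinant. -/
lemma det_differentiableAt {d : ℕ} {M : ℝ → Matrix (Fin d) (Fin d) ℝ} {t : ℝ}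
    (h : ∀ i j, DifferentiableAt ℝ (fun s => M s i j) t) :
    DifferentiableAt ℝ (fun s => (M s).det) t := by
  simp only [Matrix.det_apply, Units.smul_def, zsmul_eq_mul]
  exact DifferentiableAt.fun_sum fun σ _ =>
    (HasDerivAt.fun_finsetProd (fun i _ => (h (σ i) i).hasDerivAt)).differentiableAt.const_mul _

attribute [local instance] Matrix.normedAddCommGroup Matrix.normedSpace

/-- State transition matrix `Φ(r,t) = exp(A(r-t))`. -/
noncomputable def Phi {d : ℕ} (A : Matrix (Fin d) (Fin d) ℝ) (r t : ℝ) :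
    Matrix (Fin d) (Fin d) ℝ :=
  NormedSpace.exp ((r - t) • A)

/-- Controllability Gramian `W(t,r) = ∫_t^r Φ(r,τ) B Bᵀ Φ(r,τ)ᵀ dτ`. -/
noncomputable def Gram {d m : ℕ} (A : Matrix (Fin d) (Fin d) ℝ)
    (B : Matrix (Fin d) (Fin m) ℝ) (t r : ℝ) : Matrix (Fin d) (Fin d) ℝ :=
  ∫ τ in t..r, Phi A r τ * B * Bᵀ * (Phi A r τ)ᵀ

lemma phi_continuous {d : ℕ} (A : Matrix (Fin d) (Fin d) ℝ) (r : ℝ) :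
    Continuous fun τ : ℝ => Phi A r τ := by
  refine continuous_pi fun i => continuous_pi fun j => ?_
  refine continuous_iff_continuousAt.2 fun t => ?_
  exact (exp_entry_hasDerivAt A r t i j).continuousAt

theorem coefficient_differential_identity {d m : ℕ}
    (A : Matrix (Fin d) (Fin d) ℝ) (B : Matrix (Fin d) (Fin m) ℝ)
    {t r : ℝ} (ht : t < r)
    (v : ℝ → Fin m → ℝ) (hv : Continuous v)
    (z : ℝ → Fin d → ℝ)
    (hz : ∀ τ ∈ Set.Icc t r, HasDerivAt z (A *ᵥ z τ + B *ᵥ v τ) τ)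
    (hW : ∀ t' < r, IsUnit (Gram A B t' r)) :
    ∃ c' : Fin d → ℝ,
      HasDerivAt
        (fun t' => (Gram A B t' r)⁻¹ *ᵥ ∫ τ in t'..r, (Phi A r τ * B) *ᵥ v τ)
        c' t ∧
      Gram A B t r *ᵥ c' -
          (Phi A r t * B * Bᵀ * (Phi A r t)ᵀ) *ᵥ
            ((Gram A B t r)⁻¹ *ᵥ ∫ τ in t..r, (Phi A r τ * B) *ᵥ v τ)
        = -((Phi A r t * B) *ᵥ v t) := by
  -- notation
  set G : ℝ → Matrix (Fin d) (Fin d) ℝ :=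
    fun τ => Phi A r τ * B * Bᵀ * (Phi A r τ)ᵀ with hGdef
  set g : ℝ → Matrix (Fin d) (Fin d) ℝ := fun u => Gram A B u r with hgdef
  set f : ℝ → Fin d → ℝ := fun u => ∫ τ in u..r, (Phi A r τ * B) *ᵥ v τ with hfdef
  set c : ℝ → Fin d → ℝ := fun u => (g u)⁻¹ *ᵥ f u with hcdef
  have hphi := phi_continuous A r
  -- continuity of integrands
  have hGc : Continuous G :=
    ((hphi.matrix_mul continuous_const).matrix_mul continuous_const).matrix_mul
      hphi.matrix_transpose
  have hfc : Continuous fun τ => (Phi A r τ * B) *ᵥ v τ :=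
    (hphi.matrix_mul continuous_const).matrix_mulVec hv
  -- derivative of the Gramian
  have hg' : HasDerivAt g (-(G t)) t := by
    refine integral_hasDerivAt_left (hGc.intervalIntegrable t r) ?_ hGc.continuousAt
    haveI : TopologicalSpace.PseudoMetrizableSpace (Matrix (Fin d) (Fin d) ℝ) :=
      inferInstanceAs (TopologicalSpace.PseudoMetrizableSpace (Fin d → Fin d → ℝ))
    exact hGc.stronglyMeasurable.stronglyMeasurableAtFilter
  -- derivative of f
  have hf' : HasDerivAt f (-((Phi A r t * B) *ᵥ v t)) t := by
    refine integral_hasDerivAt_left (hfc.intervalIntegrable t r) ?_ hfc.continuousAt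
    exact hfc.stronglyMeasurable.stronglyMeasurableAtFilter
  -- entrywise derivatives
  have hgij : ∀ i j, HasDerivAt (fun u => g u i j) ((-(G t)) i j) t :=
    fun i j => hasDerivAt_pi.1 (hasDerivAt_pi.1 hg' i) j
  have hfj : ∀ j, HasDerivAt (fun u => f u j) ((-((Phi A r t * B) *ᵥ v t)) j) t :=
    fun j => hasDerivAt_pi.1 hf' j
  -- differentiability of c
  have hdet_ne : (g t).det ≠ 0 :=
    ((Matrix.isUnit_iff_isUnit_det _).1 (hW t ht)).ne_zero
  have hdet_diff : DifferentiableAt ℝ (fun u => (g u).det) t :=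
    det_differentiableAt fun i j => (hgij i j).differentiableAt
  have hadj_diff : ∀ i j, DifferentiableAt ℝ (fun u => (g u).adjugate i j) t := by
    intro i j
    simp only [Matrix.adjugate_apply]
    refine det_differentiableAt fun a b => ?_
    by_cases h : a = j
    · simp [Matrix.updateRow_apply, h]
    · simpa [Matrix.updateRow_apply, h] using (hgij a b).differentiableAt
  have hinv_entry : ∀ i j, DifferentiableAt ℝ (fun u => (g u)⁻¹ i j) t := by
    intro i j
    simp only [Matrix.inv_def, Matrix.smul_apply, Ring.inverse_eq_inv', smul_eq_mul]
    exact (hdet_diff.inv hdet_ne).mul (hadj_diff i j)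
  have hc_diff : DifferentiableAt ℝ c t := by
    refine differentiableAt_pi.2 fun i => ?_
    simp only [hcdef, Matrix.mulVec, dotProduct]
    exact DifferentiableAt.fun_sum fun j _ => (hinv_entry i j).mul (hfj j).differentiableAt
  have hc' : HasDerivAt c (deriv c t) t := hc_diff.hasDerivAt
  set c' : Fin d → ℝ := deriv c t with hc'def
  have hcj : ∀ j, HasDerivAt (fun u => c u j) (c' j) t := fun j => hasDerivAt_pi.1 hc' j
  -- product rule for F = g *ᵥ c
  have hF : HasDerivAt (fun u => g u *ᵥ c u)
      (fun i => ∑ j, ((-(G t)) i j * c t j + g t i j * c' j)) t := by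
    refine hasDerivAt_pi.2 fun i => ?_
    simp only [Matrix.mulVec, dotProduct]
    exact HasDerivAt.fun_sum fun j _ => (hgij i j).mul (hcj j)
  -- F = f near t
  have hFf : (fun u => g u *ᵥ c u) =ᶠ[nhds t] f := by
    filter_upwards [Iio_mem_nhds ht] with u hu
    show g u *ᵥ ((g u)⁻¹ *ᵥ f u) = f u
    rw [Matrix.mulVec_mulVec,
      Matrix.mul_nonsing_inv _ ((Matrix.isUnit_iff_isUnit_det _).1 (hW u hu)),
      Matrix.one_mulVec]
  have huniq : (fun i => ∑ j, ((-(G t)) i j * c t j + g t i j * c' j))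
      = -((Phi A r t * B) *ᵥ v t) :=
    (hF.congr_of_eventuallyEq hFf.symm).unique hf'
  refine ⟨c', hc', ?_⟩
  funext i
  have h1 := congrFun huniq i
  show (g t *ᵥ c' - G t *ᵥ c t) i = (-((Phi A r t * B) *ᵥ v t)) i
  simp only [Pi.sub_apply, Matrix.mulVec, dotProduct, Pi.neg_apply, Matrix.neg_apply,
    neg_mul, Finset.sum_add_distrib, Finset.sum_neg_distrib] at h1 ⊢
  linarith [h1]
end

section
/- The interval coefficient of the minimum-energy bridge is consistent across subwindows: if z_τ is the minimum-energy bridge from z_0 to z_1 on [0,1] with c* = W(0,1)⁻¹(z_1 − Φ(1,0)z_0), then for any 0 ≤ t < r ≤ 1 the coefficient c(z_t,t,r) = W(t,r)⁻¹(z_r − Φ(r,t)z_t) satisfies W(t,r)c(z_t,t,r) = ∫_t^r Φ(r,τ)BBᵀΦ(1,τ)ᵀ c* dτ. -/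
open Matrix MeasureTheory intervalIntegral

attribute [local instance] Matrix.normedAddCommGroup Matrix.normedSpace

/-- The minimum-energy bridge from `z0` at time 0 to `z1` at time 1. -/
noncomputable def bridge {d m : ℕ} (A : Matrix (Fin d) (Fin d) ℝ)
    (B : Matrix (Fin d) (Fin m) ℝ) (z0 z1 : Fin d → ℝ) (τ : ℝ) : Fin d → ℝ :=
  Phi A τ 0 *ᵥ z0 +
    (Gram A B 0 τ * (Phi A 1 τ)ᵀ * (Gram A B 0 1)⁻¹) *ᵥ (z1 - Phi A 1 0 *ᵥ z0)

instance matrixENormedAddMonoid {n : ℕ} : ENormedAddMonoid (Matrix (Fin n) (Fin n) ℝ) :=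
  NormedAddGroup.toENormedAddMonoid

section Aux

variable {d m : ℕ}

/-- Semigroup property of the state transition matrix. -/
lemma Phi_mul_Phi (A : Matrix (Fin d) (Fin d) ℝ) (c b a : ℝ) :
    Phi A c b * Phi A b a = Phi A c a := by
  unfold Phi
  have h : (c - a) • A = (c - b) • A + (b - a) • A := by
    rw [← add_smul]; congr 1; ring
  rw [h]
  exact (Matrix.exp_add_of_commute _ _ (((Commute.refl A).smul_left _).smul_right _)).symm

section Cont

attribute [local instance] Matrix.linftyOpNormedRing Matrix.linftyOpNormedAlgebra
  Matrix.linftyOpNormedAddCommGroup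

lemma continuous_Phi (A : Matrix (Fin d) (Fin d) ℝ) (r : ℝ) :
    Continuous fun τ : ℝ => Phi A r τ := by
  have h : Continuous fun τ : ℝ => (r - τ) • A := by continuity
  exact NormedSpace.exp_continuous.comp h

end Cont

lemma intervalIntegral_mulVec {n : ℕ} {f : ℝ → Matrix (Fin n) (Fin n) ℝ} {a b : ℝ}
    (hf : IntervalIntegrable f volume a b) (v : Fin n → ℝ) :
    (∫ τ in a..b, f τ) *ᵥ v = ∫ τ in a..b, f τ *ᵥ v := by
  let L : Matrix (Fin n) (Fin n) ℝ →ₗ[ℝ] (Fin n → ℝ) :=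
    { toFun := fun M => M *ᵥ v
      map_add' := fun M N => Matrix.add_mulVec M N v
      map_smul' := fun c M => Matrix.smul_mulVec c M v }
  exact ((LinearMap.toContinuousLinearMap L).intervalIntegral_comp_comm hf).symm

lemma mulVec_intervalIntegral {n : ℕ} (M : Matrix (Fin n) (Fin n) ℝ)
    {g : ℝ → Fin n → ℝ} {a b : ℝ} (hg : IntervalIntegrable g volume a b) :
    M *ᵥ (∫ τ in a..b, g τ) = ∫ τ in a..b, M *ᵥ g τ :=
  ((LinearMap.toContinuousLinearMap M.mulVecLin).intervalIntegral_comp_comm hg).symm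

end Aux

theorem bridge_subwindow_coefficient {d m : ℕ}
    (A : Matrix (Fin d) (Fin d) ℝ) (B : Matrix (Fin d) (Fin m) ℝ)
    (z0 z1 : Fin d → ℝ) (hW : IsUnit (Gram A B 0 1))
    {t r : ℝ} (h0 : 0 ≤ t) (htr : t < r) (hr : r ≤ 1)
    (hWtr : IsUnit (Gram A B t r)) :
    Gram A B t r *ᵥ
        ((Gram A B t r)⁻¹ *ᵥ
          (bridge A B z0 z1 r - Phi A r t *ᵥ bridge A B z0 z1 t)) =
      ∫ τ in t..r,
        (Phi A r τ * B * Bᵀ * (Phi A 1 τ)ᵀ) *ᵥ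
          ((Gram A B 0 1)⁻¹ *ᵥ (z1 - Phi A 1 0 *ᵥ z0)) := by
  set v : Fin d → ℝ := (Gram A B 0 1)⁻¹ *ᵥ (z1 - Phi A 1 0 *ᵥ z0) with hv
  -- cancel the Gramian with its inverse
  rw [Matrix.mulVec_mulVec, Matrix.mul_nonsing_inv _ ((Matrix.isUnit_iff_isUnit_det _).mp hWtr),
    Matrix.one_mulVec]
  -- continuity of the integrand family
  have hcont : ∀ s : ℝ, Continuous fun τ : ℝ =>
      (Phi A s τ * B * Bᵀ * (Phi A 1 τ)ᵀ) *ᵥ v := fun s => by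
    exact ((((continuous_Phi A s).matrix_mul continuous_const).matrix_mul
      continuous_const).matrix_mul (continuous_Phi A 1).matrix_transpose).matrix_mulVec
      continuous_const
  have hint : ∀ (s a b : ℝ), IntervalIntegrable
      (fun τ : ℝ => (Phi A s τ * B * Bᵀ * (Phi A 1 τ)ᵀ) *ᵥ v) volume a b :=
    fun s a b => (hcont s).intervalIntegrable a b
  have hGint : ∀ (s a b : ℝ), IntervalIntegrable
      (fun τ : ℝ => Phi A s τ * B * Bᵀ * (Phi A s τ)ᵀ) volume a b := fun s a b => by
    exact ((((continuous_Phi A s).matrix_mul continuous_const).matrix_mul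
      continuous_const).matrix_mul (continuous_Phi A s).matrix_transpose).intervalIntegrable a b
  -- Gram-coefficient terms as integrals
  have key : ∀ s : ℝ, (Gram A B 0 s * (Phi A 1 s)ᵀ * (Gram A B 0 1)⁻¹) *ᵥ
        (z1 - Phi A 1 0 *ᵥ z0) =
      ∫ τ in (0:ℝ)..s, (Phi A s τ * B * Bᵀ * (Phi A 1 τ)ᵀ) *ᵥ v := by
    intro s
    rw [← Matrix.mulVec_mulVec, ← hv, ← Matrix.mulVec_mulVec, Gram,
      intervalIntegral_mulVec (hGint s 0 s)]
    congr 1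
    ext τ i
    rw [Matrix.mulVec_mulVec, Matrix.mul_assoc _ _ ((Phi A 1 s)ᵀ), ← Matrix.transpose_mul,
      Phi_mul_Phi]
  have hb : ∀ s : ℝ, bridge A B z0 z1 s =
      Phi A s 0 *ᵥ z0 + ∫ τ in (0:ℝ)..s, (Phi A s τ * B * Bᵀ * (Phi A 1 τ)ᵀ) *ᵥ v := by
    intro s; rw [bridge, key]
  rw [hb, hb, Matrix.mulVec_add, mulVec_intervalIntegral _ (hint t 0 t),
    Matrix.mulVec_mulVec, Phi_mul_Phi]
  have hpush : (fun τ : ℝ => Phi A r t *ᵥ ((Phi A t τ * B * Bᵀ * (Phi A 1 τ)ᵀ) *ᵥ v)) =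
      fun τ : ℝ => (Phi A r τ * B * Bᵀ * (Phi A 1 τ)ᵀ) *ᵥ v := by
    funext τ
    rw [Matrix.mulVec_mulVec, ← Matrix.mul_assoc, ← Matrix.mul_assoc, ← Matrix.mul_assoc,
      Phi_mul_Phi]
  rw [hpush, add_sub_add_comm, sub_self, zero_add,
    intervalIntegral.integral_interval_sub_left (hint r 0 r) (hint r 0 t)]
end
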